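/- Fix α > 0 and let (X_m)_{m∈ℤ} be the heavy-tailed i.i.d. family of the long-range model. Then 0 < ℙ( X_m < |m| for every m ∈ ℤ ) ≤ 1/2. -/

import Mathlib

/-!
Let `ν` be the law of `X₀`. It is symmetric with no atom at `0`, so `ν (-∞, 0) = 1/2`: each
event `{X_m < |m|}` has probability `≥ 1/2`, and the one for `m = 0` gives the upper bound.
Since `ν {k} ≍ |k|^{-(2+α)}`, the complementary events have summable probabilities,
`∑_m ν [|m|, ∞) = ∑_k #[-k, k] ν {k} < ∞`. Pick a finite `s` whose complement carries tail
mass `< 1`. Independence of the families indexed by `s` and by its complement factors the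
probability into `∏_{m ∈ s} P(X_m < |m|) > 0` times the probability of the intersection over
the complement, which the union bound keeps `≥ 1 - ∑_{m ∉ s} P(X_m ≥ |m|) > 0`.
-/
open MeasureTheory ProbabilityTheory Filter Topology
open scoped ENNReal

/-- The normalizing constant `Z_α = Σ_{k ≠ 0} |k|^{-(2+α)}` of the heavy-tailed law. -/
noncomputable def Zalpha (α : ℝ) : ℝ :=
  ∑' k : ℤ, if k = 0 then 0 else |(k : ℝ)| ^ (-(2 + α))

/-- A site `k ∈ ℤ` is illuminated (for the configuration `ω`) if some lamp `m`
has brightness `X m ω ≥ |m - k|`. -/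
def Illuminated {Ω : Type*} (X : ℤ → Ω → ℤ) (k : ℤ) (ω : Ω) : Prop :=
  ∃ m : ℤ, |m - k| ≤ X m ω

/-- The field `Θ_k`: equal to `1` on illuminated sites and `2` otherwise. -/
noncomputable def ThetaSite {Ω : Type*} (X : ℤ → Ω → ℤ) (k : ℤ) (ω : Ω) : ℝ :=
  haveI := Classical.propDecidable (Illuminated X k ω)
  if Illuminated X k ω then 1 else 2

/-- The random step function `θ^stripe(x) = Θ_{⌊x⌋}`. -/
noncomputable def thetaStripe {Ω : Type*} (X : ℤ → Ω → ℤ) (x : ℝ) (ω : Ω) : ℝ :=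
  ThetaSite X ⌊x⌋ ω

open MeasurableSpace
open scoped Finset

namespace ProbabilityTheory

variable {Ω : Type*} [MeasurableSpace Ω] {μ : Measure Ω}

lemma iIndepFun.iIndepSet_preimage {ι : Type*} {β : ι → Type*}
    {mβ : ∀ i, MeasurableSpace (β i)} {X : ∀ i, Ω → β i} (hX : ∀ i, Measurable (X i))
    (hind : iIndepFun X μ)
    {S : ∀ i, Set (β i)} (hS : ∀ i, MeasurableSet (S i)) :
    iIndepSet (fun i => X i ⁻¹' S i) μ :=
  (iIndepSet_iff_meas_biInter fun i => hX i (hS i)).2 fun s =>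
    hind.measure_inter_preimage_eq_mul s fun i _ => hS i

lemma measure_iInter_pos_of_iIndepSet {ι : Type*} [Countable ι] {A : ι → Set Ω}
    (hA : ∀ i, MeasurableSet (A i)) (hind : iIndepSet A μ) (hpos : ∀ i, 0 < μ (A i))
    (hsum : ∑' i, μ (A i)ᶜ ≠ ∞) : 0 < μ (⋂ i, A i) := by
  have := hind.isProbabilityMeasure
  obtain ⟨s, hs⟩ := ((ENNReal.tendsto_tsum_compl_atTop_zero hsum).eventually
    (gt_mem_nhds zero_lt_one)).exists
  have hindep :=
    hind.indep_generateFrom_of_disjoint hA (s : Set ι) (s : Set ι)ᶜ disjoint_compl_right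
  have hhead : MeasurableSet[generateFrom {t | ∃ i ∈ (s : Set ι), A i = t}]
      (⋂ i ∈ s, A i) :=
    .biInter s.countable_toSet fun i hi => measurableSet_generateFrom ⟨i, hi, rfl⟩
  have htail : MeasurableSet[generateFrom {t | ∃ i ∈ (s : Set ι)ᶜ, A i = t}]
      (⋂ i ∈ (s : Set ι)ᶜ, A i) :=
    .biInter (Set.to_countable _) fun i hi => measurableSet_generateFrom ⟨i, hi, rfl⟩
  have hsplit : ⋂ i, A i = (⋂ i ∈ s, A i) ∩ ⋂ i ∈ (s : Set ι)ᶜ, A i := by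
    ext ω
    simp only [Set.mem_iInter, Set.mem_inter_iff, Finset.mem_coe, Set.mem_compl_iff]
    exact ⟨fun h => ⟨fun i _ => h i, fun i _ => h i⟩, fun h i => by_cases (h.1 i) (h.2 i)⟩
  have hhead_pos : 0 < μ (⋂ i ∈ s, A i) := by
    rw [hind.meas_biInter s]
    exact CanonicallyOrderedAdd.prod_pos.2 fun i _ => hpos i
  have htail_pos : 0 < μ (⋂ i ∈ (s : Set ι)ᶜ, A i) := by
    have hcompl : μ (⋂ i ∈ (s : Set ι)ᶜ, A i)ᶜ < 1 := by
      rw [Set.compl_iInter₂]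
      exact (measure_biUnion_le μ (Set.to_countable _) _).trans_lt hs
    rw [pos_iff_ne_zero]
    intro h0
    rw [prob_compl_eq_one_sub (.biInter (Set.to_countable _) fun i _ => hA i), h0,
      tsub_zero] at hcompl
    exact lt_irrefl _ hcompl
  rw [hsplit, (Indep_iff _ _ μ).1 hindep _ _ hhead htail]
  exact ENNReal.mul_pos hhead_pos.ne' htail_pos.ne'

end ProbabilityTheory

lemma measure_Iio_zero_eq_half_of_symm {ν : Measure ℤ} [IsProbabilityMeasure ν]
    (hsymm : ∀ k, ν {-k} = ν {k}) (h0 : ν {0} = 0) : ν (Set.Iio 0) = 1 / 2 := by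
  have hneg : ν.map Neg.neg = ν := Measure.ext_iff_singleton.2 fun k => by
    rw [Measure.map_apply measurable_neg (measurableSet_singleton k), Set.neg_preimage,
      Set.neg_singleton, hsymm]
  have hIoi : ν (Set.Ioi 0) = ν (Set.Iio 0) := by
    conv_lhs => rw [← hneg]
    rw [Measure.map_apply measurable_neg measurableSet_Ioi, Set.neg_preimage, Set.neg_Ioi,
      neg_zero]
  have hsplit : ν (Set.Iio 0) + (ν {0} + ν (Set.Ioi 0)) = 1 := by
    rw [← measure_union (by simp) measurableSet_Ioi, ← measure_union (by simp)
      (measurableSet_singleton 0 |>.union measurableSet_Ioi), ← measure_univ (μ := ν)]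
    congr 1
    ext k
    simp only [Set.mem_union, Set.mem_Iio, Set.mem_singleton_iff, Set.mem_Ioi, Set.mem_univ,
      iff_true]
    omega
  rw [h0, zero_add, hIoi, ← two_mul] at hsplit
  rw [ENNReal.eq_div_iff two_ne_zero ENNReal.ofNat_ne_top, hsplit]

lemma tsum_measure_Ici_abs (ν : Measure ℤ) :
    ∑' m : ℤ, ν (Set.Ici |m|) = ∑' k : ℤ, #(Finset.Icc (-k) k) * ν {k} := by
  simp_rw [← Measure.tsum_indicator_apply_singleton ν _ measurableSet_Ici]
  rw [ENNReal.tsum_comm]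
  refine tsum_congr fun k => ?_
  have hindicator : ∀ m : ℤ, (Set.Ici |m|).indicator (fun j => ν {j}) k
      = if m ∈ Finset.Icc (-k) k then ν {k} else 0 := fun m => by
    simp [Set.indicator_apply, abs_le]
  simp_rw [hindicator]
  rw [tsum_eq_sum (s := Finset.Icc (-k) k) (fun m hm => if_neg hm), Finset.sum_ite_mem,
    Finset.inter_self, Finset.sum_const, nsmul_eq_mul]

lemma summable_card_Icc_mul_abs_rpow {β : ℝ} (hβ : 2 < β) :
    Summable fun k : ℤ => (#(Finset.Icc (-k) k) : ℝ) * |(k : ℝ)| ^ (-β) := by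
  refine .of_nonneg_of_le (fun k => by positivity) (fun k => ?_)
    ((Real.summable_abs_int_rpow (b := β - 1) (by linarith)).mul_left 3)
  rcases eq_or_ne k 0 with rfl | hk
  · simp [Real.zero_rpow (by linarith : -β ≠ 0), Real.rpow_nonneg le_rfl]
  have hcard : (#(Finset.Icc (-k) k) : ℝ) ≤ 3 * |(k : ℝ)| := by
    have hk' : (1 : ℝ) ≤ |(k : ℝ)| := by
      rw [← Int.cast_abs]; exact_mod_cast Int.one_le_abs hk
    have hcard_int : (#(Finset.Icc (-k) k) : ℤ) ≤ 2 * |k| + 1 := by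
      rw [Int.card_Icc]; have := le_abs_self k; have := abs_nonneg k; omega
    have hcard_real : (#(Finset.Icc (-k) k) : ℝ) ≤ 2 * |(k : ℝ)| + 1 := by
      rw [← Int.cast_abs]; exact_mod_cast hcard_int
    linarith
  calc (#(Finset.Icc (-k) k) : ℝ) * |(k : ℝ)| ^ (-β)
      ≤ 3 * |(k : ℝ)| * |(k : ℝ)| ^ (-β) := by gcongr
    _ = 3 * |(k : ℝ)| ^ (-(β - 1)) := by
      rw [mul_assoc, ← Real.rpow_one_add' (abs_nonneg _) (by linarith)]; ring_nf

lemma tsum_measure_Ici_abs_ne_top {ν : Measure ℤ} {c β : ℝ} (hβ : 2 < β)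
    (hν : ∀ k, ν {k} ≤ ENNReal.ofReal (c * |(k : ℝ)| ^ (-β))) :
    ∑' m : ℤ, ν (Set.Ici |m|) ≠ ∞ := by
  rw [tsum_measure_Ici_abs]
  refine ne_top_of_le_ne_top ((summable_card_Icc_mul_abs_rpow hβ).mul_left c).tsum_ofReal_ne_top
    (ENNReal.tsum_le_tsum fun k => ?_)
  rw [mul_left_comm, ENNReal.ofReal_mul (by positivity), ENNReal.ofReal_natCast]
  gcongr
  exact hν k

/-- The law of the long-range model is nontrivial: the probability that the site `0` is
not illuminated, i.e. that `X_m < |m|` for every `m ∈ ℤ`, lies in `(0, 1/2]`. -/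
theorem nontrivial_law {Ω : Type*} [MeasurableSpace Ω] (μ : Measure Ω) [IsProbabilityMeasure μ]
    (α : ℝ) (hα : 0 < α)
    (X : ℤ → Ω → ℤ) (hXm : ∀ m, Measurable (X m))
    (hindep : iIndepFun X μ)
    (hident : ∀ m : ℤ, IdentDistrib (X m) (X 0) μ μ)
    (hlaw : ∀ k : ℤ, k ≠ 0 →
      μ {ω | X 0 ω = k} = ENNReal.ofReal ((Zalpha α)⁻¹ * |(k : ℝ)| ^ (-(2 + α))))
    (hlaw0 : μ {ω | X 0 ω = 0} = 0) :
    0 < μ {ω | ∀ m : ℤ, X m ω < |m|} ∧ μ {ω | ∀ m : ℤ, X m ω < |m|} ≤ 1 / 2 := by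
  set ν := μ.map (X 0)
  have : IsProbabilityMeasure ν := Measure.isProbabilityMeasure_map (hXm 0).aemeasurable
  have hlaw_eq : ∀ m (s : Set ℤ), μ (X m ⁻¹' s) = ν s := fun m s =>
    ((hident m).measure_mem_eq .of_discrete).trans (Measure.map_apply (hXm 0) .of_discrete).symm
  have hν : ∀ k : ℤ,
      ν {k} = ENNReal.ofReal ((Zalpha α)⁻¹ * |(k : ℝ)| ^ (-(2 + α))) := by
    intro k
    rw [← hlaw_eq 0]
    rcases eq_or_ne k 0 with rfl | hk
    · rw [Int.cast_zero, abs_zero, Real.zero_rpow (by linarith), mul_zero, ENNReal.ofReal_zero]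
      exact hlaw0
    · exact hlaw k hk
  have hhalf : ν (Set.Iio 0) = 1 / 2 :=
    measure_Iio_zero_eq_half_of_symm (fun k => by rw [hν, hν, Int.cast_neg, abs_neg])
      (by rw [← hlaw_eq 0]; exact hlaw0)
  have hE : {ω | ∀ m : ℤ, X m ω < |m|} = ⋂ m, X m ⁻¹' Set.Iio |m| := by ext; simp
  rw [hE]
  constructor
  · refine measure_iInter_pos_of_iIndepSet (fun m => hXm m measurableSet_Iio)
      (hindep.iIndepSet_preimage hXm fun _ => measurableSet_Iio) (fun m => ?_) ?_
    · rw [hlaw_eq]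
      exact (hhalf ▸ by norm_num : 0 < ν (Set.Iio 0)).trans_le
        (measure_mono (Set.Iio_subset_Iio (abs_nonneg m)))
    · simp_rw [← Set.preimage_compl, Set.compl_Iio, hlaw_eq]
      exact tsum_measure_Ici_abs_ne_top (by linarith) fun k => (hν k).le
  · calc μ (⋂ m, X m ⁻¹' Set.Iio |m|) ≤ μ (X 0 ⁻¹' Set.Iio |0|) :=
          measure_mono (Set.iInter_subset _ 0)
      _ = 1 / 2 := by rw [hlaw_eq, abs_zero, hhalf]
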